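/- arXiv:2201.05854 — 3 statements merged into one kernel-verified Lean document; each statement's English description precedes it below -/
import Mathlib

section
/- Fix real numbers δv > 0, 0 < δz < 2 and an integer N ≥ 2, and let X be the (N−1)×(N−1) tridiagonal Toeplitz matrix with diagonal c₂ = 5/(6δv), subdiagonal c₁ = (2+δz)/(24δv) and superdiagonal c₃ = (2−δz)/(24δv). Set x₀ = c₂/(2√(c₁c₃)) = 10/√(4−δz²). Then X is invertible, p_{N−1}(x₀) ≠ 0, and for all 1 ≤ q, q' ≤ N−1 the entries of the inverse are given by (X⁻¹)_{q,q'} = ((−1)^{q−q'} / √(c₁c₃)) · (√(c₁/c₃))^{q−q'} · p_{min(q,q')−1}(x₀) · p_{N−1−max(q,q')}(x₀) / p_{N−1}(x₀). -/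
/-!
Write the three diagonals as `-s u`, `2 x s`, `-s / u` with `s = √(c₁ c₃)`, `u = -√(c₁ / c₃)`
and `x = c₂ / (2 s)`. Conjugating by `diag (u ^ k)` turns the matrix into `s` times the
second-difference operator `g ↦ 2 x g k - g (k - 1) - g (k + 1)` with zero boundary values,
whose Green's function is `U_{min k j}(x) U_{n-1-max k j}(x) / U_n(x)` for the Chebyshev
polynomials `U` of the second kind: away from the pole this is the three-term recurrence of `U`,
at the pole it is the identity `U_{m+1} U_l - U_m U_{l-1} = U_{m+l+1}`. The polynomials `p_n`
are the `U_n` written out (for `x ≠ 0`), and `U_n(x₀) > 0` since `x₀ > 1`.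
-/

/-- Tridiagonal Toeplitz matrix of size `n × n` with diagonal value `a`,
subdiagonal value `b` and superdiagonal value `d`. -/
def tridiag (n : ℕ) (b a d : ℝ) : Matrix (Fin n) (Fin n) ℝ :=
  Matrix.of fun q q' : Fin n =>
    if (q : ℤ) = (q' : ℤ) then a
    else if (q : ℤ) = (q' : ℤ) + 1 then b
    else if (q : ℤ) + 1 = (q' : ℤ) then d
    else 0

/-- The polynomial `p_n(x) = (2x)^n [1 + ∑_{k=1}^{⌊n/2⌋} (−1)^k C(n−k,k) (1/(4x²))^k]`. -/
noncomputable def pPoly (n : ℕ) (x : ℝ) : ℝ :=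
  (2 * x) ^ n *
    (1 + ∑ k ∈ Finset.Icc 1 (n / 2),
      (-1 : ℝ) ^ k * ((n - k).choose k : ℝ) * (1 / (4 * x ^ 2)) ^ k)

open Finset Matrix Polynomial Polynomial.Chebyshev

namespace Polynomial.Chebyshev

theorem U_eval_pos {R : Type*} [CommRing R] [LinearOrder R] [IsStrictOrderedRing R] {x : R}
    (hx : 1 ≤ x) (n : ℕ) : 0 < (U R n).eval x := by
  have key : ∀ n : ℕ, 0 < (U R n).eval x ∧ (U R n).eval x < (U R (n + 1)).eval x := by
    intro n
    induction n with
    | zero =>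
      simp only [Nat.cast_zero, zero_add, U_zero, U_one, eval_one, eval_mul, eval_ofNat, eval_X]
      constructor <;> linarith
    | succ n ih =>
      refine ⟨ih.1.trans ih.2, ?_⟩
      push_cast
      rw [add_assoc, one_add_one_eq_two, U_add_two, eval_sub, eval_mul, eval_mul]
      simp only [eval_ofNat, eval_X]
      nlinarith
  exact (key n).1

variable (R : Type*) [CommRing R]

theorem U_add_one_mul_U_sub_U_mul_U_sub_one (m l : ℤ) :
    U R (m + 1) * U R l - U R m * U R (l - 1) = U R (m + l + 1) := by
  induction l using Polynomial.Chebyshev.induct with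
  | zero => simp
  | one => simp [U_add_one R (m + 1), mul_comm]
  | add_two n ih₁ ih₀ =>
    have hl := U_add_one R (n + 1)
    have hm := U_add_one R (m + n + 2)
    have hn := U_add_one R n
    ring_nf at hl hm hn ih₀ ih₁ ⊢
    linear_combination U R (1 + m) * hl - hm + 2 * X * ih₁ - ih₀ - U R m * hn
  | neg_add_one n ih₀ ih₁ =>
    have hl := U_sub_one R (-n)
    have hl' := U_sub_one R (-n - 1)
    have hm := U_sub_one R (m - n + 1)
    ring_nf at hl hl' hm ih₀ ih₁ ⊢
    linear_combination U R (1 + m) * hl - U R m * hl' - hm + 2 * X * ih₀ - ih₁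

theorem U_eval_eq_sum_antidiagonal (x : R) (n : ℕ) :
    (U R n).eval x =
      ∑ p ∈ antidiagonal n, (-1) ^ p.2 * (p.1.choose p.2 : R) * (2 * x) ^ (p.1 - p.2) := by
  set f : ℕ × ℕ → R := fun p => (-1) ^ p.2 * (p.1.choose p.2 : R) * (2 * x) ^ (p.1 - p.2)
  induction n using Nat.twoStepInduction with
  | zero => simp [f]
  | one => simp [f, Nat.sum_antidiagonal_succ]
  | more n ih₀ ih₁ =>
    have pascal : ∀ p ∈ antidiagonal n,
        f (p.1 + 1, p.2 + 1) = 2 * x * f (p.1, p.2 + 1) - f p := by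
      intro p _
      simp only [f, Nat.choose_succ_succ', Nat.cast_add, Nat.add_sub_add_right]
      rcases Nat.lt_or_ge p.2 p.1 with h | h
      · rw [show p.1 - p.2 = p.1 - (p.2 + 1) + 1 by omega, pow_succ]; ring
      · rw [Nat.choose_eq_zero_of_lt (by omega : p.1 < p.2 + 1)]; ring
    push_cast at ih₀ ih₁ ⊢
    rw [U_add_two, eval_sub, eval_mul, eval_mul, ih₀, ih₁, Nat.sum_antidiagonal_succ',
      Nat.sum_antidiagonal_succ, Nat.sum_antidiagonal_succ', sum_congr rfl pascal,
      sum_sub_distrib, ← mul_sum]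
    simp only [f, eval_ofNat, eval_X, pow_zero, one_mul, Nat.choose_zero_right,
      Nat.choose_zero_succ, Nat.cast_one, Nat.cast_zero, mul_one, mul_zero, zero_mul, tsub_zero, zero_add]
    ring

end Polynomial.Chebyshev

theorem pPoly_eq_U_eval {x : ℝ} (hx : x ≠ 0) (n : ℕ) : pPoly n x = (U ℝ n).eval x := by
  have hrange : range (n / 2 + 1) = insert 0 (Icc 1 (n / 2)) := by
    ext k; simp only [mem_range, mem_insert, mem_Icc]; omega
  have hterm : ∀ k ∈ Icc 1 (n / 2),
      (2 * x) ^ n * ((-1) ^ k * ((n - k).choose k : ℝ) * (1 / (4 * x ^ 2)) ^ k)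
        = (-1) ^ k * ((n - k).choose k : ℝ) * (2 * x) ^ (n - k - k) := by
    intro k hk
    have h2k : k + k ≤ n := by simp only [mem_Icc] at hk; omega
    rw [show (2 * x) ^ n = (2 * x) ^ (n - k - k) * ((2 * x) ^ 2) ^ k by
      rw [← pow_mul, ← pow_add]; congr 1; omega, one_div, show 4 * x ^ 2 = (2 * x) ^ 2 by ring,
      inv_pow]
    field_simp
  have hzero : ∀ k ∈ range (n + 1), k ∉ range (n / 2 + 1) →
      (-1) ^ k * ((n - k).choose k : ℝ) * (2 * x) ^ (n - k - k) = 0 := by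
    intro k _ hk
    rw [Nat.choose_eq_zero_of_lt (by simp only [mem_range] at hk; omega)]
    simp
  rw [pPoly, U_eval_eq_sum_antidiagonal, ← Nat.sum_antidiagonal_swap,
    Nat.sum_antidiagonal_eq_sum_range_succ_mk]
  simp only [Prod.swap, Nat.succ_eq_add_one]
  rw [← sum_subset (by intro k; simp only [mem_range]; omega) hzero,
    hrange, sum_insert (by simp), mul_add, mul_one, mul_sum, sum_congr rfl hterm]
  simp

noncomputable def chebyshevGreen (R : Type*) [CommRing R] (n j k : ℤ) : R[X] :=
  U R (min k j) * U R (n - 1 - max k j)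

section chebyshevGreen

variable (R : Type*) [CommRing R]

theorem chebyshevGreen_recurrence (n j k : ℤ) :
    2 * X * chebyshevGreen R n j k - chebyshevGreen R n j (k - 1) - chebyshevGreen R n j (k + 1) =
      if k = j then U R n else 0 := by
  simp only [chebyshevGreen]
  rcases lt_trichotomy k j with h | rfl | h
  · rw [if_neg h.ne, min_eq_left h.le, min_eq_left (by omega : k - 1 ≤ j),
      min_eq_left (by omega : k + 1 ≤ j), max_eq_right h.le, max_eq_right (by omega : k - 1 ≤ j),
      max_eq_right (by omega : k + 1 ≤ j)]
    linear_combination -U R (n - 1 - j) * U_add_one R k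
  · have h := U_add_one_mul_U_sub_U_mul_U_sub_one R k (n - 1 - k)
    have hk := U_add_one R k
    simp only [if_true, min_self, max_self, min_eq_left (by omega : k - 1 ≤ k),
      min_eq_right (by omega : k ≤ k + 1), max_eq_right (by omega : k - 1 ≤ k),
      max_eq_left (by omega : k ≤ k + 1)]
    rw [show n - 1 - k - 1 = n - 1 - (k + 1) by ring, show k + (n - 1 - k) + 1 = n by ring] at h
    linear_combination h - U R (n - 1 - k) * hk
  · rw [if_neg h.ne', min_eq_right h.le, min_eq_right (by omega : j ≤ k - 1),
      min_eq_right (by omega : j ≤ k + 1), max_eq_left h.le, max_eq_left (by omega : j ≤ k - 1),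
      max_eq_left (by omega : j ≤ k + 1)]
    have hk := U_add_one R (n - 1 - k)
    rw [show n - 1 - k + 1 = n - 1 - (k - 1) by ring,
      show n - 1 - k - 1 = n - 1 - (k + 1) by ring] at hk
    linear_combination -U R j * hk

theorem chebyshevGreen_at_neg_one {n j : ℤ} (hj : 0 ≤ j) : chebyshevGreen R n j (-1) = 0 := by
  simp [chebyshevGreen, min_eq_left (by omega : (-1 : ℤ) ≤ j)]

theorem chebyshevGreen_at_n {n j : ℤ} (hj : j < n) : chebyshevGreen R n j n = 0 := by
  simp [chebyshevGreen, max_eq_left hj.le]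

end chebyshevGreen

theorem sum_fin_ite_intCast_eq {n : ℕ} (c : ℤ) (f : ℤ → ℝ) :
    (∑ k : Fin n, if (k : ℤ) = c then f k else 0) = if 0 ≤ c ∧ c < n then f c else 0 := by
  split_ifs with h
  · lift c to ℕ using h.1
    rw [sum_eq_single_of_mem ⟨c, by omega⟩ (mem_univ _)
      fun k _ hk => if_neg fun h' => hk (Fin.ext (by exact_mod_cast h'))]
    simp
  · exact sum_eq_zero fun k _ => if_neg fun h' => h (by omega)

theorem tridiag_mulVec_apply {n : ℕ} (b a d : ℝ) (g : ℤ → ℝ) (h₀ : g (-1) = 0) (hn : g n = 0)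
    (q : Fin n) :
    (tridiag n b a d *ᵥ fun k => g k) q = b * g (q - 1) + a * g q + d * g (q + 1) := by
  have hrow : ∀ k : Fin n, tridiag n b a d q k * g k =
      ((if (k : ℤ) = q - 1 then b * g k else 0) + (if (k : ℤ) = q then a * g k else 0)) +
        (if (k : ℤ) = q + 1 then d * g k else 0) := by
    intro k
    simp only [tridiag, Matrix.of_apply]
    split_ifs <;> first | omega | ring
  have hq := q.isLt
  have hleft : (if 0 ≤ (q : ℤ) - 1 ∧ (q : ℤ) - 1 < n then b * g (q - 1) else 0) =
      b * g (q - 1) := by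
    split_ifs with h
    · rfl
    · rw [show (q : ℤ) - 1 = -1 by omega, h₀, mul_zero]
  have hright : (if 0 ≤ (q : ℤ) + 1 ∧ (q : ℤ) + 1 < n then d * g (q + 1) else 0) =
      d * g (q + 1) := by
    split_ifs with h
    · rfl
    · rw [show (q : ℤ) + 1 = n by omega, hn, mul_zero]
  simp only [mulVec, dotProduct]
  rw [sum_congr rfl fun k _ => hrow k, sum_add_distrib, sum_add_distrib,
    sum_fin_ite_intCast_eq (f := fun k => b * g k), sum_fin_ite_intCast_eq (f := fun k => a * g k),
    sum_fin_ite_intCast_eq (f := fun k => d * g k), hleft, hright, if_pos (by omega)]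

noncomputable def chebyshevGreenMatrix (n : ℕ) (x s u : ℝ) : Matrix (Fin n) (Fin n) ℝ :=
  Matrix.of fun k j => u ^ ((k : ℤ) - j) * (chebyshevGreen ℝ n j k).eval x / (s * (U ℝ n).eval x)

theorem tridiag_mul_chebyshevGreenMatrix (n : ℕ) {x s u : ℝ} (hs : s ≠ 0) (hu : u ≠ 0)
    (hU : (U ℝ n).eval x ≠ 0) :
    tridiag n (-(s * u)) (2 * x * s) (-(s / u)) * chebyshevGreenMatrix n x s u = 1 := by
  ext q j
  set G : ℤ → ℝ := fun k => (chebyshevGreen ℝ n j k).eval x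
  have hG : 2 * x * G q - G (q - 1) - G (q + 1) = if (q : ℤ) = j then (U ℝ n).eval x else 0 := by
    simpa [G, apply_ite (eval x)] using congrArg (eval x) (chebyshevGreen_recurrence ℝ n j q)
  have h₀ : G (-1) = 0 := by simp [G, chebyshevGreen_at_neg_one ℝ (Int.natCast_nonneg j)]
  have hn : G n = 0 := by simp [G, chebyshevGreen_at_n ℝ (by exact_mod_cast j.isLt : (j : ℤ) < n)]
  have hrow := tridiag_mulVec_apply (-(s * u)) (2 * x * s) (-(s / u))
    (fun k => u ^ (k - j) * G k / (s * (U ℝ n).eval x)) (by simp [h₀]) (by simp [hn]) q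
  rw [mul_apply', one_apply]
  simp only [mulVec, chebyshevGreenMatrix, of_apply] at hrow ⊢
  refine hrow.trans ?_
  rw [show (q : ℤ) - 1 - j = q - j - 1 by ring, show (q : ℤ) + 1 - j = q - j + 1 by ring,
    zpow_sub_one₀ hu, zpow_add_one₀ hu]
  calc _ = u ^ ((q : ℤ) - j) / (U ℝ n).eval x * (2 * x * G q - G (q - 1) - G (q + 1)) := by
        field_simp
        ring
    _ = if q = j then 1 else 0 := by
        rw [hG]
        split_ifs with h₁ h₂ h₂
        · simp [h₂, hU]
        · exact absurd (Fin.ext (by exact_mod_cast h₁)) h₂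
        · exact absurd (by rw [h₂]) h₁
        · simp

theorem tridiag_isUnit_and_inv_eq {n : ℕ} {b a d : ℝ} (hb : 0 < b) (hd : 0 < d)
    (hU : (U ℝ n).eval (a / (2 * √(b * d))) ≠ 0) :
    IsUnit (tridiag n b a d) ∧
      (tridiag n b a d)⁻¹ = chebyshevGreenMatrix n (a / (2 * √(b * d))) √(b * d) (-√(b / d)) := by
  have hs : 0 < √(b * d) := Real.sqrt_pos.mpr (mul_pos hb hd)
  have hr : 0 < √(b / d) := Real.sqrt_pos.mpr (div_pos hb hd)
  have hT : tridiag n b a d = tridiag n (-(√(b * d) * -√(b / d)))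
      (2 * (a / (2 * √(b * d))) * √(b * d)) (-(√(b * d) / -√(b / d))) := by
    rw [Real.sqrt_mul hb.le, Real.sqrt_div hb.le]
    have hb' := Real.sq_sqrt hb.le
    have hd' := Real.sq_sqrt hd.le
    have : 0 < √b := Real.sqrt_pos.mpr hb
    have : 0 < √d := Real.sqrt_pos.mpr hd
    congr 1 <;> field_simp <;> linarith
  have h := tridiag_mul_chebyshevGreenMatrix n hs.ne' (neg_ne_zero.mpr hr.ne') hU
  rw [← hT] at h
  exact ⟨(isUnit_iff_isUnit_det _).mpr (isUnit_det_of_right_inverse h), inv_eq_right_inv h⟩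

/-- Indices are 0-based: the paper's `q ∈ {1,…,N−1}` is `q.val + 1`. -/
theorem stmt4_general (δv δz : ℝ) (hδv : 0 < δv) (hδz : 0 < δz) (hδz2 : δz < 2)
    (N : ℕ)
    (c₁ c₂ c₃ x₀ : ℝ)
    (hc₁ : c₁ = (2 + δz) / (24 * δv)) (hc₂ : c₂ = 5 / (6 * δv))
    (hc₃ : c₃ = (2 - δz) / (24 * δv))
    (hx₀ : x₀ = c₂ / (2 * Real.sqrt (c₁ * c₃))) :
    x₀ = 10 / Real.sqrt (4 - δz ^ 2) ∧
    IsUnit (tridiag (N - 1) c₁ c₂ c₃) ∧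
    pPoly (N - 1) x₀ ≠ 0 ∧
    ∀ q q' : Fin (N - 1),
      (tridiag (N - 1) c₁ c₂ c₃)⁻¹ q q' =
        (-1 : ℝ) ^ ((q : ℤ) - (q' : ℤ)) / Real.sqrt (c₁ * c₃) *
          Real.sqrt (c₁ / c₃) ^ ((q : ℤ) - (q' : ℤ)) *
          (pPoly (min (q : ℕ) (q' : ℕ)) x₀ *
            pPoly (N - 2 - max (q : ℕ) (q' : ℕ)) x₀ / pPoly (N - 1) x₀) := by
  have h4 : 0 < 4 - δz ^ 2 := by nlinarith
  have hsqrt : √(c₁ * c₃) = √(4 - δz ^ 2) / (24 * δv) := by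
    rw [hc₁, hc₃, show (2 + δz) / (24 * δv) * ((2 - δz) / (24 * δv))
        = (4 - δz ^ 2) / (24 * δv) ^ 2 by ring, Real.sqrt_div' _ (sq_nonneg _), Real.sqrt_sq (by positivity)]
  have hx₀' : x₀ = 10 / √(4 - δz ^ 2) := by
    rw [hx₀, hc₂, hsqrt]
    field_simp
    ring
  have hx₁ : 1 ≤ x₀ := by
    rw [hx₀', le_div_iff₀ (Real.sqrt_pos.mpr h4), one_mul, Real.sqrt_le_left (by norm_num)]
    nlinarith
  have hp : ∀ m : ℕ, pPoly m x₀ = (U ℝ m).eval x₀ :=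
    pPoly_eq_U_eval (zero_lt_one.trans_le hx₁).ne'
  obtain ⟨hunit, hinv⟩ := tridiag_isUnit_and_inv_eq (n := N - 1) (a := c₂)
    (by rw [hc₁]; positivity) (by rw [hc₃]; apply div_pos <;> linarith)
    (hx₀ ▸ (U_eval_pos hx₁ _).ne')
  refine ⟨hx₀', hunit, hp _ ▸ (U_eval_pos hx₁ _).ne', fun q q' => ?_⟩
  have hq := q.isLt
  have hq' := q'.isLt
  rw [hinv, ← hx₀, chebyshevGreenMatrix, of_apply, chebyshevGreen, eval_mul, hp, hp, hp,
    neg_eq_neg_one_mul, mul_zpow, Nat.cast_min, show (N - 1 : ℕ) - 1 - max (q : ℤ) q'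
      = ((N - 2 - max (q : ℕ) q' : ℕ) : ℤ) by omega]
  ring

/-- explicit formula for the entries of the inverse of the
tridiagonal Toeplitz matrix `X` (indices `q, q'` below are 0-based, so the
paper's `q ∈ {1,…,N−1}` corresponds to `q.val + 1`). -/
theorem stmt4 (δv δz : ℝ) (hδv : 0 < δv) (hδz : 0 < δz) (hδz2 : δz < 2)
    (N : ℕ) (hN : 2 ≤ N)
    (c₁ c₂ c₃ x₀ : ℝ)
    (hc₁ : c₁ = (2 + δz) / (24 * δv)) (hc₂ : c₂ = 5 / (6 * δv))
    (hc₃ : c₃ = (2 - δz) / (24 * δv))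
    (hx₀ : x₀ = c₂ / (2 * Real.sqrt (c₁ * c₃))) :
    x₀ = 10 / Real.sqrt (4 - δz ^ 2) ∧
    IsUnit (tridiag (N - 1) c₁ c₂ c₃) ∧
    pPoly (N - 1) x₀ ≠ 0 ∧
    ∀ q q' : Fin (N - 1),
      (tridiag (N - 1) c₁ c₂ c₃)⁻¹ q q' =
        (-1 : ℝ) ^ ((q : ℤ) - (q' : ℤ)) / Real.sqrt (c₁ * c₃) *
          Real.sqrt (c₁ / c₃) ^ ((q : ℤ) - (q' : ℤ)) *
          (pPoly (min (q : ℕ) (q' : ℕ)) x₀ *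
            pPoly (N - 2 - max (q : ℕ) (q' : ℕ)) x₀ / pPoly (N - 1) x₀) :=
  stmt4_general δv δz hδv hδz hδz2 N c₁ c₂ c₃ x₀ hc₁ hc₂ hc₃ hx₀
end

section
/- Fix real numbers δv > 0, 0 < δz < 2 and an integer N ≥ 2, and let X be the (N−1)×(N−1) tridiagonal Toeplitz matrix with diagonal c₂ = 5/(6δv), subdiagonal c₁ = (2+δz)/(24δv) and superdiagonal c₃ = (2−δz)/(24δv). Then the entries of X⁻¹ alternate in sign in checkerboard fashion: for all 1 ≤ q, q' ≤ N−1 one has (−1)^{q−q'} · (X⁻¹)_{q,q'} > 0. In particular the diagonal entries of X⁻¹ are positive and each entry differs in sign from its horizontal and vertical neighbours. -/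
theorem le_sum_ite_of_subsingleton {ι M : Type*} [Fintype ι] [AddCommMonoid M] [PartialOrder M]
    [IsOrderedAddMonoid M] {p : ι → Prop} [DecidablePred p] (hp : ∀ i j, p i → p j → i = j)
    {c : M} (hc : c ≤ 0) : c ≤ ∑ i, if p i then c else 0 := by
  rw [Finset.sum_ite, Finset.sum_const_zero, add_zero, Finset.sum_const]
  have hcard : (Finset.univ.filter p).card ≤ 1 := Finset.card_le_one.2 fun i hi j hj =>
    hp i j (Finset.mem_filter.1 hi).2 (Finset.mem_filter.1 hj).2
  interval_cases (Finset.univ.filter p).card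
  · simpa using hc
  · simp

namespace Matrix

variable {ι 𝕜 : Type*} [Fintype ι] [Field 𝕜] [LinearOrder 𝕜] [IsStrictOrderedRing 𝕜]
  {Y : Matrix ι ι 𝕜}

theorem nonneg_of_mulVec_nonneg (hZ : ∀ i j, i ≠ j → Y i j ≤ 0) (hrow : ∀ i, 0 < ∑ j, Y i j)
    {v : ι → 𝕜} (hv : 0 ≤ Y *ᵥ v) : 0 ≤ v := by
  intro i
  by_contra! hi
  obtain ⟨k, -, hk⟩ := Finset.exists_min_image Finset.univ v ⟨i, Finset.mem_univ i⟩
  have hvk : v k < 0 := (hk i (Finset.mem_univ i)).trans_lt hi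
  have hexcess : ∑ l, Y k l * (v l - v k) ≤ 0 := by
    refine Finset.sum_nonpos fun l _ => ?_
    rcases eq_or_ne k l with rfl | hkl
    · simp
    · exact mul_nonpos_of_nonpos_of_nonneg (hZ k l hkl) (sub_nonneg.2 (hk l (Finset.mem_univ l)))
  have hsplit : (Y *ᵥ v) k = (∑ l, Y k l) * v k + ∑ l, Y k l * (v l - v k) := by
    simp only [mulVec, dotProduct, Finset.sum_mul, ← Finset.sum_add_distrib]
    exact Finset.sum_congr rfl fun l _ => by ring
  have hYvk : 0 ≤ (Y *ᵥ v) k := hv k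
  linarith [mul_neg_of_pos_of_neg (hrow k) hvk]

variable [DecidableEq ι]

theorem det_ne_zero_of_rowSum_pos (hZ : ∀ i j, i ≠ j → Y i j ≤ 0)
    (hrow : ∀ i, 0 < ∑ j, Y i j) : Y.det ≠ 0 := by
  intro hdet
  obtain ⟨v, hv, hYv⟩ := exists_mulVec_eq_zero_iff.2 hdet
  have hpos : 0 ≤ v := nonneg_of_mulVec_nonneg hZ hrow (by rw [hYv])
  have hneg : 0 ≤ -v := nonneg_of_mulVec_nonneg hZ hrow (by rw [mulVec_neg, hYv, neg_zero])
  exact hv (le_antisymm (neg_nonneg.1 hneg) hpos)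

theorem inv_apply_nonneg_of_rowSum_pos (hZ : ∀ i j, i ≠ j → Y i j ≤ 0)
    (hrow : ∀ i, 0 < ∑ j, Y i j) (i j : ι) : 0 ≤ Y⁻¹ i j := by
  refine nonneg_of_mulVec_nonneg hZ hrow (v := fun i => Y⁻¹ i j) (fun i => ?_) i
  change 0 ≤ (Y * Y⁻¹) i j
  rw [mul_nonsing_inv Y (isUnit_iff_ne_zero.2 (det_ne_zero_of_rowSum_pos hZ hrow)), one_apply]
  split_ifs <;> norm_num

theorem one_apply_le_sum_mul_inv (hZ : ∀ i j, i ≠ j → Y i j ≤ 0)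
    (hrow : ∀ i, 0 < ∑ j, Y i j) {k : ι} (j : ι) {s : Finset ι} (hk : k ∈ s) :
    (1 : Matrix ι ι 𝕜) k j ≤ ∑ i ∈ s, Y k i * Y⁻¹ i j := by
  rw [← mul_nonsing_inv Y (isUnit_iff_ne_zero.2 (det_ne_zero_of_rowSum_pos hZ hrow)), mul_apply,
    ← Finset.sum_sdiff (Finset.subset_univ s)]
  refine add_le_of_nonpos_left (Finset.sum_nonpos fun i hi => ?_)
  have hki : k ≠ i := by rintro rfl; exact (Finset.mem_sdiff.1 hi).2 hk
  exact mul_nonpos_of_nonpos_of_nonneg (hZ k i hki) (inv_apply_nonneg_of_rowSum_pos hZ hrow i j)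

theorem inv_apply_self_pos_of_rowSum_pos (hZ : ∀ i j, i ≠ j → Y i j ≤ 0)
    (hrow : ∀ i, 0 < ∑ j, Y i j) (j : ι) : 0 < Y⁻¹ j j := by
  have h := one_apply_le_sum_mul_inv hZ hrow j (Finset.mem_singleton_self j)
  rw [one_apply_eq, Finset.sum_singleton] at h
  refine (inv_apply_nonneg_of_rowSum_pos hZ hrow j j).lt_of_ne fun h0 => ?_
  rw [← h0, mul_zero] at h
  norm_num at h

theorem inv_apply_pos_of_apply_neg (hZ : ∀ i j, i ≠ j → Y i j ≤ 0)
    (hrow : ∀ i, 0 < ∑ j, Y i j) {k l j : ι} (hkl : Y k l < 0) (hl : 0 < Y⁻¹ l j) :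
    0 < Y⁻¹ k j := by
  rcases eq_or_ne k l with rfl | hne
  · exact hl
  rcases eq_or_ne k j with rfl | hkj
  · exact inv_apply_self_pos_of_rowSum_pos hZ hrow k
  have h := one_apply_le_sum_mul_inv hZ hrow j (Finset.mem_insert_self k {l})
  rw [one_apply_ne hkj, Finset.sum_pair hne] at h
  refine (inv_apply_nonneg_of_rowSum_pos hZ hrow k j).lt_of_ne fun h0 => ?_
  rw [← h0, mul_zero, zero_add] at h
  exact (mul_neg_of_neg_of_pos hkl hl).not_ge h

theorem inv_diagonal_mul_mul_diagonal {R : Type*} [CommRing R] {s : ι → R}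
    (hs : ∀ i, s i * s i = 1) (M : Matrix ι ι R) :
    (diagonal s * M * diagonal s)⁻¹ = diagonal s * M⁻¹ * diagonal s := by
  have hD : (diagonal s)⁻¹ = diagonal s :=
    inv_eq_left_inv (by rw [diagonal_mul_diagonal, funext hs, diagonal_one])
  rw [mul_inv_rev, mul_inv_rev, hD, Matrix.mul_assoc]

end Matrix

section Tridiag

variable {n : ℕ} {b a d : ℝ}

theorem tridiag_apply_eq_sum (i j : Fin n) :
    tridiag n b a d i j = (if i = j then a else 0) + (if (i : ℤ) = j + 1 then b else 0)
      + (if (i : ℤ) + 1 = j then d else 0) := by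
  simp only [tridiag, Matrix.of_apply, Fin.ext_iff]
  split_ifs <;> first | (exfalso; omega) | ring

theorem tridiag_apply_of_succ_eq {i j : Fin n} (h : (i : ℕ) + 1 = j) :
    tridiag n b a d i j = d := by
  rw [tridiag_apply_eq_sum, if_neg (by omega), if_neg (by omega), if_pos (by omega)]
  ring

theorem tridiag_apply_of_eq_succ {i j : Fin n} (h : (i : ℕ) = j + 1) :
    tridiag n b a d i j = b := by
  rw [tridiag_apply_eq_sum, if_neg (by omega), if_pos (by omega), if_neg (by omega)]
  ring

theorem tridiag_apply_nonpos_of_ne (hb : b ≤ 0) (hd : d ≤ 0) {i j : Fin n} (hij : i ≠ j) :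
    tridiag n b a d i j ≤ 0 := by
  rw [tridiag_apply_eq_sum, if_neg hij, zero_add]
  exact add_nonpos (ite_nonpos hb le_rfl) (ite_nonpos hd le_rfl)

theorem add_add_le_sum_tridiag_apply (hb : b ≤ 0) (hd : d ≤ 0) (i : Fin n) :
    a + b + d ≤ ∑ j, tridiag n b a d i j := by
  simp only [tridiag_apply_eq_sum, Finset.sum_add_distrib, Finset.sum_ite_eq, Finset.mem_univ,
    if_true]
  have hsub := le_sum_ite_of_subsingleton (p := fun j : Fin n => (i : ℤ) = j + 1)
    (fun j j' h h' => Fin.ext (by omega)) hb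
  have hsup := le_sum_ite_of_subsingleton (p := fun j : Fin n => (i : ℤ) + 1 = j)
    (fun j j' h h' => Fin.ext (by omega)) hd
  linarith

theorem inv_tridiag_neg_apply_pos (hb : 0 < b) (hd : 0 < d) (hbda : b + d < a) (k j : Fin n) :
    0 < (tridiag n (-b) a (-d))⁻¹ k j := by
  have hZ : ∀ i j : Fin n, i ≠ j → tridiag n (-b) a (-d) i j ≤ 0 := fun i j =>
    tridiag_apply_nonpos_of_ne (by linarith) (by linarith)
  have hrow : ∀ i : Fin n, 0 < ∑ j, tridiag n (-b) a (-d) i j := fun i =>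
    lt_of_lt_of_le (by linarith) (add_add_le_sum_tridiag_apply (by linarith) (by linarith) i)
  suffices ∀ t : ℕ, ∀ k : Fin n, ((k : ℤ) - j).natAbs = t →
      0 < (tridiag n (-b) a (-d))⁻¹ k j from this _ k rfl
  intro t
  induction t with
  | zero =>
    intro k hk
    obtain rfl : k = j := Fin.ext (by omega)
    exact Matrix.inv_apply_self_pos_of_rowSum_pos hZ hrow k
  | succ t ih =>
    intro k hk
    rcases lt_or_gt_of_ne (show (k : ℕ) ≠ j by omega) with hkj | hkj
    · refine Matrix.inv_apply_pos_of_apply_neg hZ hrow (l := ⟨k + 1, by omega⟩) ?_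
        (ih _ (by dsimp only; omega))
      rw [tridiag_apply_of_succ_eq rfl]
      linarith
    · refine Matrix.inv_apply_pos_of_apply_neg hZ hrow (l := ⟨k - 1, by omega⟩) ?_
        (ih _ (by dsimp only; omega))
      rw [tridiag_apply_of_eq_succ (by dsimp only; omega)]
      linarith

theorem tridiag_eq_diagonal_mul_tridiag_neg_mul_diagonal (n : ℕ) (b a d : ℝ) :
    tridiag n b a d = Matrix.diagonal (fun i : Fin n => (-1) ^ (i : ℕ)) * tridiag n (-b) a (-d)
      * Matrix.diagonal (fun i : Fin n => (-1) ^ (i : ℕ)) := by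
  ext i j
  have hodd : ∀ k : ℕ, (-1 : ℝ) ^ (k + 1) * (-1) ^ k = -1 := fun k => by
    rw [pow_succ, mul_right_comm, ← mul_pow]; norm_num
  rw [Matrix.mul_diagonal, Matrix.diagonal_mul, tridiag_apply_eq_sum, tridiag_apply_eq_sum]
  split_ifs with hdiag hsub hsup <;> try (exfalso; omega)
  · subst hdiag; rw [mul_right_comm, ← mul_pow]; norm_num
  · rw [show (i : ℕ) = j + 1 by omega]; linear_combination b * hodd j
  · rw [show (j : ℕ) = i + 1 by omega]; linear_combination d * hodd i
  · simp

theorem neg_one_zpow_natCast_sub (i j : ℕ) :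
    (-1 : ℝ) ^ ((i : ℤ) - j) = (-1) ^ i * (-1) ^ j := by
  rw [zpow_sub₀ (by norm_num), zpow_natCast, zpow_natCast, div_eq_mul_inv, ← inv_pow, inv_neg,
    inv_one]

theorem neg_one_zpow_sub_mul_inv_tridiag_apply_pos (hb : 0 < b) (hd : 0 < d) (hbda : b + d < a)
    (i j : Fin n) : 0 < (-1 : ℝ) ^ ((i : ℤ) - j) * (tridiag n b a d)⁻¹ i j := by
  have hsq : ∀ k : ℕ, (-1 : ℝ) ^ k * (-1) ^ k = 1 := fun k => by rw [← mul_pow]; norm_num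
  rw [tridiag_eq_diagonal_mul_tridiag_neg_mul_diagonal,
    Matrix.inv_diagonal_mul_mul_diagonal (fun i : Fin n => hsq i), Matrix.mul_diagonal,
    Matrix.diagonal_mul, neg_one_zpow_natCast_sub]
  calc (0 : ℝ) < (-1) ^ (i : ℕ) * (-1) ^ (i : ℕ) * ((-1) ^ (j : ℕ) * (-1) ^ (j : ℕ))
        * (tridiag n (-b) a (-d))⁻¹ i j := by
        rw [hsq, hsq, one_mul, one_mul]; exact inv_tridiag_neg_apply_pos hb hd hbda i j
    _ = _ := by ring

end Tridiag

theorem stmt6_general (δv δz : ℝ) (hδv : 0 < δv) (hδz : 0 < δz) (hδz2 : δz < 2)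
    (N : ℕ) :
    ∀ q q' : Fin (N - 1),
      0 < (-1 : ℝ) ^ ((q : ℤ) - (q' : ℤ)) *
        (tridiag (N - 1) ((2 + δz) / (24 * δv)) (5 / (6 * δv))
          ((2 - δz) / (24 * δv)))⁻¹ q q' := by
  refine neg_one_zpow_sub_mul_inv_tridiag_apply_pos (by positivity)
    (div_pos (by linarith) (by positivity)) ?_
  rw [← add_div, div_lt_div_iff₀ (by positivity) (by positivity)]
  nlinarith

/-- the entries of `X⁻¹` alternate in sign in checkerboard fashion:
`(−1)^{q−q'} (X⁻¹)_{q,q'} > 0` for all entries. -/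
theorem stmt6 (δv δz : ℝ) (hδv : 0 < δv) (hδz : 0 < δz) (hδz2 : δz < 2)
    (N : ℕ) (hN : 2 ≤ N) :
    ∀ q q' : Fin (N - 1),
      0 < (-1 : ℝ) ^ ((q : ℤ) - (q' : ℤ)) *
        (tridiag (N - 1) ((2 + δz) / (24 * δv)) (5 / (6 * δv))
          ((2 - δz) / (24 * δv)))⁻¹ q q' :=
  stmt6_general δv δz hδv hδz hδz2 N
end

section
/- Fix real numbers δv > 0, 0 < δz < 2 and an integer N ≥ 2, and let X be the (N−1)×(N−1) tridiagonal Toeplitz matrix with diagonal c₂ = 5/(6δv), subdiagonal c₁ = (2+δz)/(24δv) and superdiagonal c₃ = (2−δz)/(24δv). Then X is invertible and the spectral norm of its inverse satisfies ‖X⁻¹‖₂ < √(12/5)·δv. -/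
/-- The spectral norm (`L²` operator norm) of a real square matrix: the operator
norm of the induced linear map on the Euclidean space. -/
noncomputable def spectralNorm2 {n : ℕ} (A : Matrix (Fin n) (Fin n) ℝ) : ℝ :=
  ‖Matrix.toEuclideanCLM (𝕜 := ℝ) A‖


/-!
Write `X = a • 1 + R`, where `R` is the off-diagonal part with entries `b` and `d`. Every row and
every column of `R` has absolute sum at most `|b| + |d|`, so by the Schur test `‖R‖₂ ≤ |b| + |d|`.
Hence `‖X x‖ ≥ (a - |b| - |d|) ‖x‖`, which makes `X` invertible with
`‖X⁻¹‖₂ ≤ (a - |b| - |d|)⁻¹`. For the given coefficients `|b| + |d| = a / 5`, so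
`‖X⁻¹‖₂ ≤ 3 δv / 2 < √(12/5) δv`.
-/

open Matrix Finset

theorem Finset.sum_ite_le_of_subsingleton {α : Type*} [Fintype α] {p : α → Prop}
    [DecidablePred p] (hp : ∀ x y, p x → p y → x = y) {c : ℝ} (hc : 0 ≤ c) :
    ∑ x, (if p x then c else 0) ≤ c := by
  rw [sum_ite, sum_const_zero, add_zero, sum_const, nsmul_eq_mul]
  have hcard : #(univ.filter p) ≤ 1 := card_le_one.2 fun x hx y hy => by
    simp only [mem_filter, mem_univ, true_and] at hx hy
    exact hp x y hx hy
  exact mul_le_of_le_one_left hc (by exact_mod_cast hcard)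

theorem ContinuousLinearMap.sub_mul_norm_le_norm_apply_of_norm_sub_smul_one_le {E : Type*}
    [NormedAddCommGroup E] [NormedSpace ℝ E] {T : E →L[ℝ] E} {a s : ℝ} (h : ‖T - a • 1‖ ≤ s)
    (x : E) : (a - s) * ‖x‖ ≤ ‖T x‖ := by
  have hperturb : ‖T x - a • x‖ ≤ s * ‖x‖ := by simpa using (T - a • 1).le_of_opNorm_le h x
  have hax : a * ‖x‖ ≤ ‖a • x‖ := by
    rw [norm_smul, Real.norm_eq_abs]
    gcongr
    exact le_abs_self a
  linarith [norm_le_norm_add_norm_sub (T x) (a • x)]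

theorem Matrix.sq_mulVec_apply_le {m n : Type*} [Fintype n] (A : Matrix m n ℝ) (x : n → ℝ)
    (i : m) : (A *ᵥ x) i ^ 2 ≤ (∑ j, |A i j|) * ∑ j, |A i j| * x j ^ 2 :=
  sum_sq_le_sum_mul_sum_of_sq_le_mul _ (fun _ _ => abs_nonneg _) (fun _ _ => by positivity)
    fun j _ => le_of_eq <| by rw [mul_pow, ← sq_abs (A i j)]; ring

namespace Matrix

variable {ι : Type*} [Fintype ι] [DecidableEq ι]

theorem norm_toEuclideanCLM_le_of_sum_abs_le (A : Matrix ι ι ℝ) {s : ℝ} (hs : 0 ≤ s)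
    (hrow : ∀ i, ∑ j, |A i j| ≤ s) (hcol : ∀ j, ∑ i, |A i j| ≤ s) :
    ‖toEuclideanCLM (n := ι) (𝕜 := ℝ) A‖ ≤ s := by
  refine ContinuousLinearMap.opNorm_le_bound _ hs fun x => le_of_sq_le_sq ?_ (by positivity)
  rw [mul_pow, EuclideanSpace.real_norm_sq_eq, EuclideanSpace.real_norm_sq_eq,
    ofLp_toEuclideanCLM]
  calc ∑ i, (A *ᵥ x.ofLp) i ^ 2
      ≤ ∑ i, s * ∑ j, |A i j| * x.ofLp j ^ 2 := by
        gcongr with i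
        exact (A.sq_mulVec_apply_le _ i).trans
          (mul_le_mul_of_nonneg_right (hrow i) (by positivity))
    _ = s * ∑ j, (∑ i, |A i j|) * x.ofLp j ^ 2 := by
        simp only [← mul_sum, sum_mul]
        rw [sum_comm]
    _ ≤ s * ∑ j, s * x.ofLp j ^ 2 := by gcongr with j; exact hcol j
    _ = s ^ 2 * ∑ j, x.ofLp j ^ 2 := by rw [← mul_sum]; ring

theorem isUnit_and_norm_inv_le_of_norm_sub_smul_one_le {A : Matrix ι ι ℝ} {a s : ℝ}
    (hsa : s < a) (h : ‖toEuclideanCLM (n := ι) (𝕜 := ℝ) (A - a • 1)‖ ≤ s) :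
    IsUnit A ∧ ‖toEuclideanCLM (n := ι) (𝕜 := ℝ) A⁻¹‖ ≤ (a - s)⁻¹ := by
  set T := toEuclideanCLM (n := ι) (𝕜 := ℝ)
  rw [map_sub, map_smul, map_one] at h
  have hbound := ContinuousLinearMap.sub_mul_norm_le_norm_apply_of_norm_sub_smul_one_le h
  have hpos : 0 < a - s := sub_pos.2 hsa
  have hA : IsUnit A := by
    rw [← mulVec_injective_iff_isUnit]
    intro x y hxy
    have hker : T A (WithLp.toLp 2 (x - y)) = 0 := by simp [T, hxy]
    have hle := hbound (WithLp.toLp 2 (x - y))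
    rw [hker, norm_zero, mul_nonpos_iff_pos_imp_nonpos] at hle
    simpa [sub_eq_zero] using hle.1 hpos
  have hright : T A * T A⁻¹ = 1 := by
    rw [← map_mul, mul_nonsing_inv _ ((isUnit_iff_isUnit_det A).1 hA), map_one]
  refine ⟨hA, ContinuousLinearMap.opNorm_le_bound _ (inv_nonneg.2 hpos.le) fun y => ?_⟩
  rw [inv_mul_eq_div, le_div_iff₀' hpos]
  calc (a - s) * ‖T A⁻¹ y‖ ≤ ‖(T A * T A⁻¹) y‖ := hbound _
    _ = ‖y‖ := by rw [hright]; rfl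

end Matrix

theorem tridiag_sub_smul_one (n : ℕ) (b a d : ℝ) :
    tridiag n b a d - a • 1 = tridiag n b 0 d := by
  ext q q'
  simp only [tridiag, Matrix.sub_apply, of_apply, Matrix.smul_apply, one_apply, Fin.ext_iff,
    smul_eq_mul]
  split_ifs <;> first | omega | ring

theorem transpose_tridiag (n : ℕ) (b a d : ℝ) : (tridiag n b a d)ᵀ = tridiag n d a b := by
  ext q q'
  simp only [tridiag, transpose_apply, of_apply]
  split_ifs <;> first | rfl | omega

theorem sum_abs_tridiag_zero_apply_le (n : ℕ) (b d : ℝ) (q : Fin n) :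
    ∑ q', |tridiag n b 0 d q q'| ≤ |b| + |d| := by
  calc ∑ q', |tridiag n b 0 d q q'|
      ≤ ∑ q' : Fin n, ((if (q : ℤ) = (q' : ℤ) + 1 then |b| else 0)
          + if (q : ℤ) + 1 = (q' : ℤ) then |d| else 0) := by
        gcongr with q'
        simp only [tridiag, of_apply]
        split_ifs <;> simp [add_nonneg]
    _ ≤ |b| + |d| := by
        rw [sum_add_distrib]
        gcongr
        · exact sum_ite_le_of_subsingleton (fun x y hx hy => by omega) (abs_nonneg b)
        · exact sum_ite_le_of_subsingleton (fun x y hx hy => by omega) (abs_nonneg d)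

theorem spectralNorm2_tridiag_zero_le (n : ℕ) (b d : ℝ) :
    spectralNorm2 (tridiag n b 0 d) ≤ |b| + |d| :=
  norm_toEuclideanCLM_le_of_sum_abs_le _ (by positivity) (sum_abs_tridiag_zero_apply_le n b d)
    fun q' => by
      have hcol (q : Fin n) : tridiag n b 0 d q q' = tridiag n d 0 b q' q := by
        rw [← transpose_tridiag n b 0 d]
        rfl
      simpa only [hcol, add_comm] using sum_abs_tridiag_zero_apply_le n d b q'

theorem isUnit_tridiag_and_spectralNorm2_inv_le {n : ℕ} {b a d : ℝ} (h : |b| + |d| < a) :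
    IsUnit (tridiag n b a d) ∧ spectralNorm2 (tridiag n b a d)⁻¹ ≤ (a - (|b| + |d|))⁻¹ :=
  isUnit_and_norm_inv_le_of_norm_sub_smul_one_le h <| by
    rw [tridiag_sub_smul_one]
    exact spectralNorm2_tridiag_zero_le n b d

theorem stmt11_general (δv δz : ℝ) (hδv : 0 < δv) (hδz : 0 < δz) (hδz2 : δz < 2)
    (N : ℕ) :
    IsUnit (tridiag (N - 1) ((2 + δz) / (24 * δv)) (5 / (6 * δv))
      ((2 - δz) / (24 * δv))) ∧
    spectralNorm2 ((tridiag (N - 1) ((2 + δz) / (24 * δv)) (5 / (6 * δv))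
      ((2 - δz) / (24 * δv)))⁻¹) < Real.sqrt (12 / 5) * δv := by
  have hsum : |(2 + δz) / (24 * δv)| + |(2 - δz) / (24 * δv)| = 1 / (6 * δv) := by
    rw [abs_of_pos (by positivity), abs_of_pos (div_pos (by linarith) (by positivity))]
    field_simp
    ring
  have hgap : 5 / (6 * δv) - 1 / (6 * δv) = (3 / 2 * δv)⁻¹ := by
    field_simp
    ring
  have hdom : |(2 + δz) / (24 * δv)| + |(2 - δz) / (24 * δv)| < 5 / (6 * δv) := by
    rw [hsum]
    gcongr
    norm_num
  obtain ⟨hunit, hnorm⟩ := isUnit_tridiag_and_spectralNorm2_inv_le (n := N - 1) hdom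
  refine ⟨hunit, ?_⟩
  rw [hsum, hgap, inv_inv] at hnorm
  have hconst : 3 / 2 < Real.sqrt (12 / 5) := (Real.lt_sqrt (by norm_num)).2 (by norm_num)
  exact hnorm.trans_lt (mul_lt_mul_of_pos_right hconst hδv)

/-- `X` is invertible and `‖X⁻¹‖₂ < √(12/5)·δv`. -/
theorem stmt11 (δv δz : ℝ) (hδv : 0 < δv) (hδz : 0 < δz) (hδz2 : δz < 2)
    (N : ℕ) (hN : 2 ≤ N) :
    IsUnit (tridiag (N - 1) ((2 + δz) / (24 * δv)) (5 / (6 * δv))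
      ((2 - δz) / (24 * δv))) ∧
    spectralNorm2 ((tridiag (N - 1) ((2 + δz) / (24 * δv)) (5 / (6 * δv))
      ((2 - δz) / (24 * δv)))⁻¹) < Real.sqrt (12 / 5) * δv :=
  stmt11_general δv δz hδv hδz hδz2 N
end
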